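/- For integers n ≥ 2 and 1 ≤ k ≤ n−1, for every partition of the vertex set of the k-circulant digraph C_n(1,…,k) into nonempty disjoint subsets S1 and S2 with S1 ∪ S2 equal to the whole vertex set, there exists a vertex i ∈ S1 with at least ⌈k/2⌉ in-neighbors in S2, or a vertex j ∈ S2 with at least ⌈k/2⌉ in-neighbors in S1. -/

import Mathlib

/-!
Walking around the cycle from a vertex of `S1` to a vertex of `S2` gives a boundary vertex
`j ∈ S1` with `j - 1 ∈ S2`. If `j` has fewer than `⌈k/2⌉` in-neighbours in `S2`, it has at
least `⌈k/2⌉` in `S1`; none of them is `j - 1`, and `K_j \ {j - 1} ⊆ K_{j-1}`, so the vertex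
`j - 1 ∈ S2` has at least `⌈k/2⌉` in-neighbours in `S1`.
-/

/-- In-neighbor set of vertex `j` in the `k`-circulant digraph `C_n(1,…,k)`:
`K_j = {j-1, j-2, …, j-k}` (mod `n`). -/
def circInNbrs (n k : ℕ) (j : ZMod n) : Finset (ZMod n) :=
  (Finset.Icc 1 k).image fun a : ℕ => j - (a : ZMod n)

open Finset

theorem ZMod.exists_mem_sub_one_notMem {n : ℕ} [NeZero n] {S : Set (ZMod n)} {x y : ZMod n}
    (hx : x ∈ S) (hy : y ∉ S) : ∃ v ∈ S, v - 1 ∉ S := by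
  by_contra! hclosed
  have hsub : ∀ m : ℕ, x - m ∈ S := by
    intro m
    induction m with
    | zero => simpa using hx
    | succ m ih => simpa [sub_sub] using hclosed _ ih
  exact hy (by simpa using hsub (x - y).val)

theorem card_circInNbrs {n k : ℕ} (hk : k < n) (j : ZMod n) : #(circInNbrs n k j) = k := by
  rw [circInNbrs, card_image_of_injOn, Nat.card_Icc, Nat.add_sub_cancel]
  intro a ha b hb hab
  simp only [coe_Icc, Set.mem_Icc] at ha hb
  have hcast : (a : ZMod n) = b := sub_right_injective hab
  rwa [ZMod.natCast_eq_natCast_iff', Nat.mod_eq_of_lt (by omega), Nat.mod_eq_of_lt (by omega)]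
    at hcast

theorem circInNbrs_subset_insert_sub_one (n k : ℕ) (j : ZMod n) :
    circInNbrs n k j ⊆ insert (j - 1) (circInNbrs n k (j - 1)) := by
  intro x hx
  obtain ⟨a, ha, rfl⟩ := mem_image.mp hx
  rw [mem_Icc] at ha
  rcases Nat.eq_or_lt_of_le ha.1 with rfl | ha1
  · simp
  · refine mem_insert_of_mem (mem_image.mpr ⟨a - 1, mem_Icc.mpr ⟨by omega, by omega⟩, ?_⟩)
    rw [Nat.cast_sub ha1.le]
    ring

theorem card_inter_add_card_inter_of_partition {α : Type*} [DecidableEq α] (s : Finset α)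
    {S1 S2 : Finset α} (hdisj : Disjoint S1 S2) (hcover : ∀ v, v ∈ S1 ∨ v ∈ S2) :
    #(s ∩ S1) + #(s ∩ S2) = #s := by
  rw [← card_union_of_disjoint (hdisj.mono inter_subset_right inter_subset_right),
    ← inter_union_distrib_left, inter_eq_left.mpr fun v _ => mem_union.mpr (hcover v)]

theorem circulant_partition_reachable_general (n k : ℕ) (hk1 : 1 ≤ k)
    (hk2 : k ≤ n - 1) (S1 S2 : Finset (ZMod n))
    (h1 : S1.Nonempty) (h2 : S2.Nonempty) (hdisj : Disjoint S1 S2)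
    (hcover : ∀ v : ZMod n, v ∈ S1 ∨ v ∈ S2) :
    (∃ i ∈ S1, (k + 1) / 2 ≤ ((circInNbrs n k i) ∩ S2).card) ∨
      (∃ j ∈ S2, (k + 1) / 2 ≤ ((circInNbrs n k j) ∩ S1).card) := by
  have hkn : k < n := by omega
  have : NeZero n := ⟨by omega⟩
  obtain ⟨x, hx⟩ := h1
  obtain ⟨y, hy⟩ := h2
  obtain ⟨j, hj, hj1⟩ := ZMod.exists_mem_sub_one_notMem (S := (S1 : Set (ZMod n)))
    hx (disjoint_right.mp hdisj hy)
  by_cases hc : (k + 1) / 2 ≤ #(circInNbrs n k j ∩ S2)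
  · exact Or.inl ⟨j, hj, hc⟩
  refine Or.inr ⟨j - 1, (hcover _).resolve_left hj1, ?_⟩
  have hsplit := card_inter_add_card_inter_of_partition (circInNbrs n k j) hdisj hcover
  have hmono : #(circInNbrs n k j ∩ S1) ≤ #(circInNbrs n k (j - 1) ∩ S1) :=
    calc #(circInNbrs n k j ∩ S1)
        ≤ #(insert (j - 1) (circInNbrs n k (j - 1)) ∩ S1) :=
          card_le_card (inter_subset_inter (circInNbrs_subset_insert_sub_one n k j) Subset.rfl)
      _ = #(circInNbrs n k (j - 1) ∩ S1) := by rw [insert_inter_of_notMem hj1]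
  rw [card_circInNbrs hkn] at hsplit
  omega

/-- For every partition of the vertex set of `C_n(1,…,k)` into nonempty disjoint
subsets `S1` and `S2` covering all vertices, some vertex of `S1` has at least
`⌈k/2⌉` in-neighbors in `S2`, or some vertex of `S2` has at least `⌈k/2⌉`
in-neighbors in `S1`. -/
theorem circulant_partition_reachable (n k : ℕ) (hn : 2 ≤ n) (hk1 : 1 ≤ k)
    (hk2 : k ≤ n - 1) (S1 S2 : Finset (ZMod n))
    (h1 : S1.Nonempty) (h2 : S2.Nonempty) (hdisj : Disjoint S1 S2)
    (hcover : ∀ v : ZMod n, v ∈ S1 ∨ v ∈ S2) :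
    (∃ i ∈ S1, (k + 1) / 2 ≤ ((circInNbrs n k i) ∩ S2).card) ∨
      (∃ j ∈ S2, (k + 1) / 2 ≤ ((circInNbrs n k j) ∩ S1).card) :=
  circulant_partition_reachable_general n k hk1 hk2 S1 S2 h1 h2 hdisj hcover
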